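/- Let n ≥ 5 and let T be a triangulation of the n-gon containing exactly two chords of length 2 (exactly two ears). Then for every i with 2 ≤ i ≤ ⌈n/2⌉ − 1, T contains exactly two chords of length i, and, if n is even, T contains exactly one chord of length n/2 (a diameter). -/

import Mathlib

open scoped Classical

/-- The cyclic distance between two vertices of the `n`-gon labeled by `ZMod n`:
`min (k, n - k)` where `k` is the representative of `b - a`. -/
def cycDist {n : ℕ} (a b : ZMod n) : ℕ := min (b - a).val (a - b).val

/-- The length of an unordered pair of vertices (in particular, of a chord). -/
def chordLen {n : ℕ} (p : Sym2 (ZMod n)) : ℕ :=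
  Sym2.lift ⟨fun a b => cycDist a b, fun _ _ => min_comm _ _⟩ p

/-- `x` lies strictly inside the clockwise arc from `a` to `b`. -/
def InArc {n : ℕ} (a b x : ZMod n) : Prop :=
  0 < (x - a).val ∧ (x - a).val < (b - a).val

/-- Two chords cross: their four endpoints are distinct and exactly one endpoint of the
second chord lies strictly inside the clockwise arc from `a` to `b`. -/
def Crosses {n : ℕ} (p q : Sym2 (ZMod n)) : Prop :=
  ∃ a b c d : ZMod n, p = s(a, b) ∧ q = s(c, d) ∧
    a ≠ b ∧ a ≠ c ∧ a ≠ d ∧ b ≠ c ∧ b ≠ d ∧ c ≠ d ∧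
    Xor' (InArc a b c) (InArc a b d)

/-- A triangulation of the `n`-gon: a set of `n - 3` pairwise non-crossing chords
(each chord having length at least 2). -/
def IsTriangulation (n : ℕ) (T : Finset (Sym2 (ZMod n))) : Prop :=
  T.card = n - 3 ∧ (∀ p ∈ T, 2 ≤ chordLen p) ∧
    ∀ p ∈ T, ∀ q ∈ T, p ≠ q → ¬ Crosses p q

/-- The total chord length of a triangulation. -/
def TCL (n : ℕ) (T : Finset (Sym2 (ZMod n))) : ℕ := ∑ p ∈ T, chordLen p

/-- A diameter is a chord of length `n / 2` (only possible for `n` even). -/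
def IsDiameter {n : ℕ} (p : Sym2 (ZMod n)) : Prop := 2 * chordLen p = n

/-- The chord `p` layers the boundary edge `{i, i + 1}`: the edge lies on the (strictly)
shorter of the two arcs between the endpoints of `p`.  (Diameters never layer an edge.) -/
def LayersEdge {n : ℕ} (p : Sym2 (ZMod n)) (i : ZMod n) : Prop :=
  ∃ a b : ZMod n, p = s(a, b) ∧ (b - a).val < (a - b).val ∧ (i - a).val < (b - a).val

/-- The doubled layer number of the boundary edge `{i, i + 1}`:
twice the number of non-diameter chords layering it, plus the number of diameters. -/
noncomputable def mT (n : ℕ) (T : Finset (Sym2 (ZMod n))) (i : ZMod n) : ℕ :=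
  2 * (T.filter (fun p => LayersEdge p i ∧ ¬ IsDiameter p)).card +
    (T.filter (fun p => IsDiameter p)).card

/-- Subdivision of a triangulation of the `n`-gon at the boundary edge `{n-1, 0}`:
re-embed all chords (via representatives in `{0, …, n-1}`) into the `(n+1)`-gon, whose new
vertex `n` lies between `n - 1` and `0`, and add the chord `{n - 1, 0}`. -/
def subdiv (n : ℕ) (T : Finset (Sym2 (ZMod n))) : Finset (Sym2 (ZMod (n + 1))) :=
  T.image (Sym2.map (fun a : ZMod n => ((a.val : ℕ) : ZMod (n + 1)))) ∪
    {s(((n - 1 : ℕ) : ZMod (n + 1)), (0 : ZMod (n + 1)))}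

/-- Doubling construction: subdivide every boundary edge of the `m`-gon (old vertex `a`
becomes `2a` in the `2m`-gon) and add the chord `{2a, 2a+2}` over each new vertex. -/
def doubleTri (m : ℕ) (T : Finset (Sym2 (ZMod m))) : Finset (Sym2 (ZMod (2 * m))) :=
  T.image (Sym2.map (fun a : ZMod m => ((2 * a.val : ℕ) : ZMod (2 * m)))) ∪
    (Finset.range m).image
      (fun a : ℕ => s(((2 * a : ℕ) : ZMod (2 * m)), ((2 * a + 2 : ℕ) : ZMod (2 * m))))

/-!
Orient each chord `s(a, b)` of a triangulation so that the clockwise arc from `a` to `b` is the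
shorter one. Then some ear of the triangulation lies under it: either a shorter chord lies under it
(recurse), or the ear `s(a, a + 2)` crosses no chord and so belongs to the triangulation by
maximality. Maximality comes from the bound `n - 3` on the size of any family of pairwise
non-crossing chords, proved by induction on `n` by deleting the vertex just under a shortest chord.
Two distinct chords of the same non-diameter length over one ear cross, so with two ears there are
at most two chords of each length `i < n / 2`, and there is at most one diameter. These bounds add
up to `n - 3`, the number of chords, so all of them are attained.
-/

open Finset

section Chord

variable {n : ℕ}

lemma chordLen_mk (a b : ZMod n) : chordLen s(a, b) = min (b - a).val (a - b).val := rfl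

lemma chordLen_map_add (t : ZMod n) (p : Sym2 (ZMod n)) :
    chordLen (p.map (· + t)) = chordLen p := by
  induction p using Sym2.inductionOn with
  | hf a b => simp [chordLen_mk, add_sub_add_right_eq_sub]

lemma exists_eq_mk_chordLen_eq (p : Sym2 (ZMod n)) :
    ∃ a b, p = s(a, b) ∧ chordLen p = (b - a).val ∧ (b - a).val ≤ (a - b).val := by
  induction p using Sym2.inductionOn with
  | hf u w =>
    rcases le_total (w - u).val (u - w).val with h | h
    · exact ⟨u, w, rfl, min_eq_left h, h⟩
    · exact ⟨w, u, Sym2.eq_swap, by rw [chordLen_mk, min_eq_right h], h⟩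

variable [NeZero n]

lemma val_sub_eq_ite (x y : ZMod n) :
    (x - y).val = if y.val ≤ x.val then x.val - y.val else x.val + n - y.val := by
  split_ifs with h
  · exact ZMod.val_sub h
  · have hyx : (y - x).val = y.val - x.val := ZMod.val_sub (by omega)
    have hne : y - x ≠ 0 := fun h0 => by rw [h0, ZMod.val_zero] at hyx; omega
    rw [← neg_sub, ZMod.neg_val, if_neg hne, hyx]
    have := ZMod.val_lt y
    omega

lemma val_sub_add_val_sub {a b : ZMod n} (h : a ≠ b) : (b - a).val + (a - b).val = n := by
  rw [← neg_sub b a, ZMod.neg_val, if_neg (sub_ne_zero.mpr h.symm)]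
  have := ZMod.val_lt (b - a)
  omega

lemma two_mul_chordLen_le (p : Sym2 (ZMod n)) : 2 * chordLen p ≤ n := by
  obtain ⟨a, b, rfl, hlen, hle⟩ := exists_eq_mk_chordLen_eq p
  rcases eq_or_ne a b with rfl | h
  · simp [chordLen_mk]
  · have := val_sub_add_val_sub h
    omega

lemma val_sub_inj {a x y : ZMod n} : (x - a).val = (y - a).val ↔ x = y :=
  (ZMod.val_injective n).eq_iff.trans sub_left_inj

-- Measuring all positions from one base vertex `a` turns the crossing conditions into linear
-- arithmetic on the values `(x - a).val`.
lemma val_sub_sub_eq_ite (a x y : ZMod n) : (x - y).val =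
    if (y - a).val ≤ (x - a).val then (x - a).val - (y - a).val
    else (x - a).val + n - (y - a).val := by
  rw [← val_sub_eq_ite, sub_sub_sub_cancel_right]

lemma inArc_swap_iff {a b x : ZMod n} (hab : a ≠ b) (hxa : x ≠ a) (hxb : x ≠ b) :
    InArc b a x ↔ ¬ InArc a b x := by
  simp only [ne_eq, ← val_sub_inj (a := a), sub_self, ZMod.val_zero] at hab hxa hxb
  simp only [InArc, val_sub_sub_eq_ite a _ b, sub_self, ZMod.val_zero]
  have := ZMod.val_lt (b - a); have := ZMod.val_lt (x - a)
  split_ifs <;> omega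

lemma crosses_mk_iff {a b c d : ZMod n} :
    Crosses s(a, b) s(c, d) ↔ a ≠ b ∧ a ≠ c ∧ a ≠ d ∧ b ≠ c ∧ b ≠ d ∧ c ≠ d ∧
      Xor (InArc a b c) (InArc a b d) := by
  refine ⟨?_, fun h => ⟨a, b, c, d, rfl, rfl, h⟩⟩
  rintro ⟨a', b', c', d', hp, hq, h1, h2, h3, h4, h5, h6, h7⟩
  rw [Sym2.eq_iff] at hp hq
  have swap : Xor (InArc b' a' c') (InArc b' a' d') ↔ Xor (InArc a' b' c') (InArc a' b' d') := by
    rw [inArc_swap_iff h1 h2.symm h4.symm, inArc_swap_iff h1 h3.symm h5.symm, xor_not_not]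
  rcases hp with ⟨rfl, rfl⟩ | ⟨rfl, rfl⟩ <;> rcases hq with ⟨rfl, rfl⟩ | ⟨rfl, rfl⟩
  · exact ⟨h1, h2, h3, h4, h5, h6, h7⟩
  · exact ⟨h1, h3, h2, h5, h4, h6.symm, h7.symm⟩
  · exact ⟨h1.symm, h4, h5, h2, h3, h6, swap.mpr h7⟩
  · exact ⟨h1.symm, h5, h4, h3, h2, h6.symm, (swap.mpr h7).symm⟩

lemma Crosses.symm {p q : Sym2 (ZMod n)} (h : Crosses p q) : Crosses q p := by
  induction p using Sym2.inductionOn with | hf a b =>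
  induction q using Sym2.inductionOn with | hf c d =>
  rw [crosses_mk_iff] at h ⊢
  simp only [ne_eq, ← val_sub_inj (a := a), sub_self, ZMod.val_zero, InArc, Xor] at h
  simp only [ne_eq, ← val_sub_inj (a := a), sub_self, ZMod.val_zero, InArc, Xor,
    val_sub_sub_eq_ite a _ c]
  have := ZMod.val_lt (b - a); have := ZMod.val_lt (c - a); have := ZMod.val_lt (d - a)
  split_ifs <;> omega

lemma IsDiameter.crosses {p q : Sym2 (ZMod n)} (hp : IsDiameter p) (hq : IsDiameter q)
    (hpq : p ≠ q) : Crosses p q := by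
  obtain ⟨a, b, rfl, hp1, -⟩ := exists_eq_mk_chordLen_eq p
  obtain ⟨c, d, rfl, hq1, -⟩ := exists_eq_mk_chordLen_eq q
  unfold IsDiameter at hp hq
  have hn := NeZero.pos n
  have hne : ¬ (a = c ∧ b = d) ∧ ¬ (a = d ∧ b = c) := by
    refine ⟨?_, ?_⟩ <;> rintro ⟨rfl, rfl⟩
    exacts [hpq rfl, hpq Sym2.eq_swap]
  simp only [← val_sub_inj (a := a), sub_self, ZMod.val_zero] at hne
  rw [val_sub_sub_eq_ite a d c] at hq1
  have := ZMod.val_lt (c - a); have := ZMod.val_lt (d - a)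
  rw [crosses_mk_iff]
  simp only [ne_eq, ← val_sub_inj (a := a), sub_self, ZMod.val_zero, InArc, Xor]
  split_ifs at hq1 <;> omega

lemma Crosses.map_add {p q : Sym2 (ZMod n)} (t : ZMod n) (h : Crosses p q) :
    Crosses (p.map (· + t)) (q.map (· + t)) := by
  obtain ⟨a, b, c, d, rfl, rfl, h1, h2, h3, h4, h5, h6, h7⟩ := h
  simp only [Sym2.map_mk, crosses_mk_iff, ne_eq, add_left_inj, InArc,
    add_sub_add_right_eq_sub]
  exact ⟨h1, h2, h3, h4, h5, h6, h7⟩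

end Chord

def IsDissection (n : ℕ) (F : Finset (Sym2 (ZMod n))) : Prop :=
  (∀ p ∈ F, 2 ≤ chordLen p) ∧ (F : Set (Sym2 (ZMod n))).Pairwise fun p q => ¬ Crosses p q

section Dissection

variable {n : ℕ} {F : Finset (Sym2 (ZMod n))}

lemma IsTriangulation.isDissection (hT : IsTriangulation n F) : IsDissection n F := hT.2

lemma IsDissection.erase (hF : IsDissection n F) (c : Sym2 (ZMod n)) :
    IsDissection n (F.erase c) :=
  ⟨fun p hp => hF.1 p (mem_of_mem_erase hp), hF.2.mono (by simp)⟩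

variable [NeZero n]

lemma crosses_map_add_iff (t : ZMod n) {p q : Sym2 (ZMod n)} :
    Crosses (p.map (· + t)) (q.map (· + t)) ↔ Crosses p q := by
  refine ⟨fun h => ?_, Crosses.map_add t⟩
  simpa [Sym2.map_map, Function.comp_def] using h.map_add (-t)

lemma IsDissection.image_map_add (hF : IsDissection n F) (t : ZMod n) :
    IsDissection n (F.image (Sym2.map (· + t))) := by
  refine ⟨?_, ?_⟩
  · simpa [chordLen_map_add] using hF.1
  · rw [coe_image, (Sym2.map.injective (add_left_injective t)).injOn.pairwise_image]
    exact hF.2.imp fun p q h => (crosses_map_add_iff t).not.mpr h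

lemma IsDissection.insert (hF : IsDissection n F) {c : Sym2 (ZMod n)} (hc : 2 ≤ chordLen c)
    (hcF : ∀ p ∈ F, ¬ Crosses c p) : IsDissection n (insert c F) := by
  refine ⟨by simpa [hc] using hF.1, ?_⟩
  rw [coe_insert, Set.pairwise_insert]
  exact ⟨hF.2, fun p hp _ => ⟨hcF p hp, fun h => hcF p hp h.symm⟩⟩

lemma IsDissection.val_sub_ne_one_of_shortest (hF : IsDissection n F) {a b : ZMod n}
    (hQ : s(a, b) ∈ F) (hmin : ∀ p ∈ F, (b - a).val ≤ chordLen p) {p : Sym2 (ZMod n)}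
    (hp : p ∈ F) (hpQ : p ≠ s(a, b)) {z : ZMod n} (hz : z ∈ p) : (z - a).val ≠ 1 := by
  intro hza
  obtain ⟨w, rfl⟩ := Sym2.mem_iff_exists.mp hz
  have hk : 2 ≤ (b - a).val := (hF.1 _ hQ).trans (min_le_left _ _)
  have hlen := hF.1 _ hp
  have hmin_p := hmin _ hp
  have hnc : ¬ Crosses s(a, b) s(z, w) := hF.2 hQ hp hpQ.symm
  rw [crosses_mk_iff] at hnc
  rw [chordLen_mk, val_sub_sub_eq_ite a w z, val_sub_sub_eq_ite a z w] at hlen hmin_p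
  simp only [ne_eq, ← val_sub_inj (a := a), sub_self, ZMod.val_zero, InArc, Xor] at hnc
  have := ZMod.val_lt (w - a); have := ZMod.val_lt (b - a)
  split_ifs at hlen hmin_p <;> omega

end Dissection

section Deletion

variable {m : ℕ} {F : Finset (Sym2 (ZMod (m + 1)))}

lemma cast_injOn : Set.InjOn (ZMod.cast : ZMod (m + 1) → ZMod m) {z | z.val < m} :=
  fun x hx y hy h => ZMod.val_injective _ <| by
    rw [← ZMod.val_cast_eq_val_of_lt hx, ← ZMod.val_cast_eq_val_of_lt hy, h]

lemma injOn_map_cast (hvert : ∀ p ∈ F, ∀ x ∈ p, x.val < m) :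
    Set.InjOn (Sym2.map (ZMod.cast : ZMod (m + 1) → ZMod m)) F := by
  intro p hp q hq hpq
  induction p using Sym2.inductionOn with | hf x y =>
  induction q using Sym2.inductionOn with | hf z w =>
  have inj {u v} (hu : u ∈ s(x, y)) (hv : v ∈ s(z, w)) (h : (u.cast : ZMod m) = v.cast) :
      u = v :=
    cast_injOn (hvert _ hp u hu) (hvert _ hq v hv) h
  simp only [Sym2.map_mk, Sym2.eq_iff] at hpq ⊢
  rcases hpq with ⟨h1, h2⟩ | ⟨h1, h2⟩
  · exact Or.inl ⟨inj (by simp) (by simp) h1, inj (by simp) (by simp) h2⟩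
  · exact Or.inr ⟨inj (by simp) (by simp) h1, inj (by simp) (by simp) h2⟩


variable [NeZero m]

lemma val_cast_sub_val_cast {x y : ZMod (m + 1)} (hx : x.val < m) (hy : y.val < m) :
    ((x.cast : ZMod m) - y.cast).val =
      if y.val ≤ x.val then x.val - y.val else x.val + m - y.val := by
  rw [val_sub_eq_ite, ZMod.val_cast_eq_val_of_lt hx, ZMod.val_cast_eq_val_of_lt hy]

lemma two_le_cycDist_cast {x y : ZMod (m + 1)} (hx : x.val < m) (hy : y.val < m)
    (hxy : x.val + 2 ≤ y.val + m) (hyx : y.val + 2 ≤ x.val + m) (h : 2 ≤ cycDist x y) :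
    2 ≤ cycDist (x.cast : ZMod m) (y.cast : ZMod m) := by
  unfold cycDist at h ⊢
  rw [val_cast_sub_val_cast hx hy, val_cast_sub_val_cast hy hx]
  rw [val_sub_eq_ite, val_sub_eq_ite] at h
  split_ifs at h ⊢ <;> omega

lemma inArc_cast_iff {a b x : ZMod (m + 1)} (ha : a.val < m) (hb : b.val < m) (hx : x.val < m) :
    InArc (a.cast : ZMod m) b.cast x.cast ↔ InArc a b x := by
  unfold InArc
  rw [val_cast_sub_val_cast hx ha, val_cast_sub_val_cast hb ha, val_sub_eq_ite, val_sub_eq_ite]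
  split_ifs <;> omega

lemma Crosses.of_map_cast {p q : Sym2 (ZMod (m + 1))} (hp : ∀ x ∈ p, x.val < m)
    (hq : ∀ x ∈ q, x.val < m)
    (h : Crosses (p.map (ZMod.cast : ZMod (m + 1) → ZMod m)) (q.map ZMod.cast)) :
    Crosses p q := by
  induction p using Sym2.inductionOn with | hf a b =>
  induction q using Sym2.inductionOn with | hf c d =>
  rw [Sym2.map_mk, Sym2.map_mk, crosses_mk_iff] at h
  obtain ⟨h1, h2, h3, h4, h5, h6, h7⟩ := h
  have ha := hp a (by simp); have hb := hp b (by simp)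
  rw [inArc_cast_iff ha hb (hq c (by simp)), inArc_cast_iff ha hb (hq d (by simp))] at h7
  exact crosses_mk_iff.mpr ⟨ne_of_apply_ne _ h1, ne_of_apply_ne _ h2, ne_of_apply_ne _ h3,
    ne_of_apply_ne _ h4, ne_of_apply_ne _ h5, ne_of_apply_ne _ h6, h7⟩

lemma IsDissection.image_map_cast (hF : IsDissection (m + 1) F)
    (hvert : ∀ p ∈ F, ∀ x ∈ p, x.val < m)
    (hwrap : ∀ p ∈ F, ∀ x ∈ p, ∀ y ∈ p, x.val + 2 ≤ y.val + m) :
    IsDissection m (F.image (Sym2.map (ZMod.cast : ZMod (m + 1) → ZMod m))) := by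
  refine ⟨?_, ?_⟩
  · simp only [mem_image, forall_exists_index, and_imp, forall_apply_eq_imp_iff₂]
    intro p hp
    induction p using Sym2.inductionOn with | hf x y =>
    exact two_le_cycDist_cast (hvert _ hp x (by simp)) (hvert _ hp y (by simp))
      (hwrap _ hp x (by simp) y (by simp)) (hwrap _ hp y (by simp) x (by simp)) (hF.1 _ hp)
  · rw [coe_image, (injOn_map_cast hvert).pairwise_image]
    exact fun p hp q hq hpq h => hF.2 hp hq hpq (h.of_map_cast (hvert p hp) (hvert q hq))

end Deletion

section Bound

variable {m : ℕ} [NeZero m] {F : Finset (Sym2 (ZMod (m + 1)))}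

lemma IsDissection.exists_card_succ_eq_of_shortest (hF : IsDissection (m + 1) F)
    {a b : ZMod (m + 1)} (hQ : s(a, b) ∈ F) (ha : a.val + 1 = m)
    (hmin : ∀ p ∈ F, (b - a).val ≤ chordLen p) :
    ∃ F' : Finset (Sym2 (ZMod m)), IsDissection m F' ∧ F'.card + 1 = F.card := by
  have hQlen := hF.1 _ hQ
  have := two_mul_chordLen_le s(a, b)
  have hvert : ∀ p ∈ F.erase s(a, b), ∀ z ∈ p, z.val < m := fun p hp z hz => by
    have h1 := hF.val_sub_ne_one_of_shortest hQ hmin (mem_of_mem_erase hp) (ne_of_mem_erase hp) hz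
    rw [val_sub_eq_ite] at h1
    have := ZMod.val_lt z
    split_ifs at h1 <;> omega
  -- `a` and `a + 2 = 0` become adjacent in the `m`-gon
  have hwrap : ∀ p ∈ F.erase s(a, b), ∀ x ∈ p, ∀ y ∈ p, x.val + 2 ≤ y.val + m := by
    intro p hp x hx y hy
    by_contra! hxy
    have hx' := hvert p hp x hx
    have hy' := hvert p hp y hy
    have hxa : x = a := ZMod.val_injective (m + 1) (by omega : x.val = a.val)
    have hya : (y - a).val = 2 := by rw [val_sub_eq_ite]; split_ifs <;> omega
    have hpy : p = s(a, y) :=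
      (Sym2.mem_and_mem_iff (by rintro rfl; simp at hya)).mp ⟨hxa ▸ hx, hy⟩
    have hb : b = y := by
      have := hmin p (mem_of_mem_erase hp)
      rw [hpy, chordLen_mk, hya] at this
      exact (val_sub_inj (a := a)).mp (by rw [chordLen_mk] at hQlen; omega)
    exact ne_of_mem_erase hp (hpy.trans (by rw [hb]))
  refine ⟨_, (hF.erase _).image_map_cast hvert hwrap, ?_⟩
  rw [card_image_of_injOn (injOn_map_cast hvert), card_erase_add_one hQ]

lemma IsDissection.exists_card_succ_eq (hF : IsDissection (m + 1) F) (hne : F.Nonempty) :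
    ∃ F' : Finset (Sym2 (ZMod m)), IsDissection m F' ∧ F'.card + 1 = F.card := by
  obtain ⟨q, hq, hmin⟩ := F.exists_min_image chordLen hne
  obtain ⟨a, b, rfl, hlen, -⟩ := exists_eq_mk_chordLen_eq q
  -- rotate so that the vertex just under the shortest chord is the last one, `m`
  set t : ZMod (m + 1) := ((m - 1 : ℕ) : ZMod (m + 1)) - a
  rw [← card_image_of_injective F (Sym2.map.injective (add_left_injective t))]
  refine (hF.image_map_add t).exists_card_succ_eq_of_shortest (a := a + t) (b := b + t)
    (mem_image.mpr ⟨_, hq, rfl⟩) ?_ ?_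
  · rw [add_sub_cancel, ZMod.val_cast_of_lt (by omega)]
    have := NeZero.pos m
    omega
  · simpa [chordLen_map_add, add_sub_add_right_eq_sub, ← hlen] using hmin

end Bound

theorem IsDissection.card_le {n : ℕ} {F : Finset (Sym2 (ZMod n))} (hF : IsDissection n F)
    (hn : 3 ≤ n) : F.card ≤ n - 3 := by
  induction n using Nat.strong_induction_on with | _ n ih =>
  rcases F.eq_empty_or_nonempty with rfl | hne
  · simp
  obtain ⟨m, rfl⟩ : ∃ m, n = m + 1 := ⟨n - 1, by omega⟩
  have : NeZero m := ⟨by omega⟩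
  have hm : 3 ≤ m := by
    obtain ⟨p, hp⟩ := hne
    have := hF.1 p hp
    have := two_mul_chordLen_le p
    omega
  obtain ⟨F', hF', hcard⟩ := hF.exists_card_succ_eq hne
  have := ih m (by omega) hF' hm
  omega

lemma IsTriangulation.mem_of_forall_not_crosses {n : ℕ} [NeZero n]
    {T : Finset (Sym2 (ZMod n))} (hT : IsTriangulation n T) {c : Sym2 (ZMod n)}
    (hc : 2 ≤ chordLen c) (hcT : ∀ p ∈ T, ¬ Crosses c p) : c ∈ T := by
  by_contra hcT'
  have := two_mul_chordLen_le c
  have := (hT.isDissection.insert hc hcT).card_le (by omega)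
  rw [card_insert_of_notMem hcT', hT.1] at this
  omega

/-- The clockwise arc from `x` to `y` lies within the clockwise arc from `a` to `b`. -/
def ArcWithin {n : ℕ} (x y a b : ZMod n) : Prop := (x - a).val + (y - x).val ≤ (b - a).val

section Ears

variable {n : ℕ}

lemma ArcWithin.trans {x y u v a b : ZMod n} (h₁ : ArcWithin x y u v) (h₂ : ArcWithin u v a b) :
    ArcWithin x y a b := by
  have := ZMod.val_add_le (x - u) (u - a)
  rw [sub_add_sub_cancel] at this
  unfold ArcWithin at *
  omega

variable [NeZero n]

lemma chordLen_eq_two {x y : ZMod n} (hn : 4 ≤ n) (h : (y - x).val = 2) :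
    chordLen s(x, y) = 2 := by
  have := val_sub_add_val_sub (a := x) (b := y) (by rintro rfl; simp at h)
  rw [chordLen_mk]
  omega

lemma crosses_of_arcWithin {a b c d x y : ZMod n} (hxy : x ≠ y) (hab : ArcWithin x y a b)
    (hcd : ArcWithin x y c d) (hlen : (b - a).val = (d - c).val) (hlt : 2 * (b - a).val < n)
    (hne : s(a, b) ≠ s(c, d)) : Crosses s(a, b) s(c, d) := by
  have hac : a ≠ c := by
    rintro rfl
    exact hne (by rw [(val_sub_inj (a := a)).mp hlen])
  unfold ArcWithin at hab hcd
  rw [ne_eq, ← val_sub_inj (a := a), sub_self, ZMod.val_zero] at hac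
  rw [ne_eq, ← val_sub_inj (a := x), sub_self, ZMod.val_zero] at hxy
  rw [← hlen, val_sub_sub_eq_ite a x c] at hcd
  rw [val_sub_sub_eq_ite a d c] at hlen
  rw [crosses_mk_iff]
  simp only [ne_eq, ← val_sub_inj (a := a), sub_self, ZMod.val_zero, InArc, Xor]
  have := ZMod.val_lt (c - a); have := ZMod.val_lt (d - a)
  split_ifs at hcd hlen <;> omega

variable {F : Finset (Sym2 (ZMod n))}

lemma IsDissection.not_crosses_ear (hF : IsDissection n F) {a b y : ZMod n} (hab : s(a, b) ∈ F)
    (hunder : ∀ u w, s(u, w) ∈ F → (w - u).val < (b - a).val → ¬ ArcWithin u w a b)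
    (hy : (y - a).val = 2) {p : Sym2 (ZMod n)} (hp : p ∈ F) : ¬ Crosses s(a, y) p := by
  induction p using Sym2.inductionOn with | hf u w =>
  intro hcr
  have hk : 2 ≤ (b - a).val := (hF.1 _ hab).trans (min_le_left _ _)
  obtain ⟨-, hau, haw, -⟩ := crosses_mk_iff.mp hcr
  have hne : s(a, b) ≠ s(u, w) := fun h => by
    rcases Sym2.mem_iff.mp (h ▸ Sym2.mem_mk_left a b) with rfl | rfl <;> contradiction
  have h1 := hunder u w hp
  have h2 := hunder w u (Sym2.eq_swap ▸ hp)
  have h3 : ¬ Crosses s(a, b) s(u, w) := hF.2 hab hp hne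
  rw [crosses_mk_iff] at hcr h3
  unfold ArcWithin at h1 h2
  simp only [ne_eq, ← val_sub_inj (a := a), sub_self, ZMod.val_zero, InArc, Xor,
    val_sub_sub_eq_ite a w u, val_sub_sub_eq_ite a u w] at hcr h1 h2 h3
  have := ZMod.val_lt (u - a); have := ZMod.val_lt (w - a)
  split_ifs at h1 h2 <;> omega

theorem IsTriangulation.exists_ear_arcWithin (hT : IsTriangulation n F) {a b : ZMod n}
    (hab : s(a, b) ∈ F) (hle : 2 * (b - a).val ≤ n) :
    ∃ x y, s(x, y) ∈ F ∧ (y - x).val = 2 ∧ ArcWithin x y a b := by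
  induction hk : (b - a).val using Nat.strong_induction_on generalizing a b with | _ k ih =>
  by_cases hunder : ∃ x y, s(x, y) ∈ F ∧ (y - x).val < k ∧ ArcWithin x y a b
  · obtain ⟨x, y, hxy, hlt, hw⟩ := hunder
    obtain ⟨x', y', h', h2, hw'⟩ := ih _ hlt hxy (by omega) rfl
    exact ⟨x', y', h', h2, hw'.trans hw⟩
  push Not at hunder
  have hk2 : 2 ≤ k := hk ▸ (hT.2.1 _ hab).trans (min_le_left _ _)
  obtain rfl | hk3 := hk2.eq_or_lt
  · exact ⟨a, b, hab, hk, by simp [ArcWithin, hk]⟩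
  have hy : (a + 2 - a).val = 2 := by
    rw [add_sub_cancel_left, ZMod.val_two_eq_two_mod, Nat.mod_eq_of_lt (by omega)]
  have hear : s(a, a + 2) ∈ F := hT.mem_of_forall_not_crosses (chordLen_eq_two (by omega) hy).ge
    fun p hp => hT.isDissection.not_crosses_ear hab (by simpa only [hk] using hunder) hy hp
  refine (hunder a (a + 2) hear (by omega) ?_).elim
  rw [ArcWithin, sub_self, ZMod.val_zero, hy, hk]
  omega

end Ears

section Counting

variable {n : ℕ} [NeZero n] {T : Finset (Sym2 (ZMod n))}

/-- Choosing an ear under each chord of length `i` is injective: two chords over one ear cross. -/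
lemma IsTriangulation.card_filter_chordLen_le_card_ears (hT : IsTriangulation n T) {i : ℕ}
    (hi : 2 * i < n) :
    (T.filter fun p => chordLen p = i).card ≤ (T.filter fun p => chordLen p = 2).card := by
  have hear : ∀ p ∈ T.filter (fun p => chordLen p = i),
      ∃ e ∈ T.filter (fun p => chordLen p = 2), ∃ a b x y, p = s(a, b) ∧ e = s(x, y) ∧
        (b - a).val = i ∧ (y - x).val = 2 ∧ ArcWithin x y a b := by
    intro p hp
    obtain ⟨hpT, hpi⟩ := mem_filter.mp hp
    obtain ⟨a, b, rfl, hlen, -⟩ := exists_eq_mk_chordLen_eq p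
    have := hT.2.1 _ hpT
    obtain ⟨x, y, hxy, h2, hw⟩ := hT.exists_ear_arcWithin hpT (by omega)
    exact ⟨s(x, y), mem_filter.mpr ⟨hxy, chordLen_eq_two (by omega) h2⟩, a, b, x, y, rfl, rfl,
      by omega, h2, hw⟩
  choose! ear hear_mem hear_spec using hear
  refine card_le_card_of_injOn ear hear_mem fun p hp q hq hpq => ?_
  by_contra hne
  obtain ⟨a, b, x, y, rfl, hpe, hab, hxy, hw⟩ := hear_spec p hp
  obtain ⟨c, d, x', y', rfl, hqe, hcd, hxy', hw'⟩ := hear_spec q hq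
  have hx : x ≠ y := by rintro rfl; simp at hxy
  rw [hpe, hqe, Sym2.eq_iff] at hpq
  rcases hpq with ⟨rfl, rfl⟩ | ⟨rfl, rfl⟩
  · exact hT.2.2 _ (mem_filter.mp hp).1 _ (mem_filter.mp hq).1 hne
      (crosses_of_arcWithin hx hw hw' (hab.trans hcd.symm) (by omega) hne)
  · -- an ear `s(x, y)` with `(y - x).val = (x - y).val = 2` forces `n = 4`
    have := val_sub_add_val_sub hx
    unfold ArcWithin at hw
    omega

lemma IsDissection.card_filter_isDiameter_le_one (hF : IsDissection n T) :
    (T.filter IsDiameter).card ≤ 1 :=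
  card_le_one.mpr fun _ hp _ hq => by_contra fun hpq =>
    hF.2 (mem_filter.mp hp).1 (mem_filter.mp hq).1 hpq
      ((mem_filter.mp hp).2.crosses (mem_filter.mp hq).2 hpq)

lemma IsTriangulation.sum_card_filter_chordLen (hT : IsTriangulation n T) :
    ∑ i ∈ Icc 2 (n / 2), (T.filter fun p => chordLen p = i).card = n - 3 := by
  rw [← hT.1]
  refine (card_eq_sum_card_fiberwise fun p hp => ?_).symm
  have := hT.2.1 p hp
  have := two_mul_chordLen_le p
  simp only [coe_Icc, Set.mem_Icc]
  omega

end Counting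

lemma sum_Icc_ite_two_mul_eq_sub_three (n : ℕ) :
    ∑ i ∈ Icc 2 (n / 2), (if 2 * i = n then 1 else 2) = n - 3 := by
  obtain ⟨m, rfl | rfl⟩ := Nat.even_or_odd' n
  · rcases Nat.lt_or_ge m 2 with hm | hm
    · interval_cases m <;> rfl
    obtain ⟨k, rfl⟩ : ∃ k, m = k + 1 := ⟨m - 1, by omega⟩
    rw [show 2 * (k + 1) / 2 = k + 1 by omega, sum_Icc_succ_top (by omega), if_pos rfl,
      sum_congr rfl fun i hi => if_neg (by simp only [mem_Icc] at hi; omega), sum_const,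
      Nat.card_Icc, smul_eq_mul]
    omega
  · rw [show (2 * m + 1) / 2 = m by omega,
      sum_congr rfl fun i _ => if_neg (by omega), sum_const, Nat.card_Icc, smul_eq_mul]
    omega

theorem two_ears_chord_profile_general (n : ℕ) (T : Finset (Sym2 (ZMod n)))
    (hT : IsTriangulation n T)
    (hears : (T.filter (fun p => chordLen p = 2)).card = 2) :
    (∀ i : ℕ, 2 ≤ i → i ≤ (n + 1) / 2 - 1 →
      (T.filter (fun p => chordLen p = i)).card = 2) ∧
    (Even n → (T.filter (fun p => IsDiameter p)).card = 1) := by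
  have hn : 5 ≤ n := by
    have := card_filter_le T fun p => chordLen p = 2
    have := hT.1
    omega
  have : NeZero n := ⟨by omega⟩
  have hle : ∀ i ∈ Icc 2 (n / 2),
      (T.filter fun p => chordLen p = i).card ≤ if 2 * i = n then 1 else 2 := by
    intro i hi
    split_ifs with h
    · refine (card_le_card fun p hp => ?_).trans hT.isDissection.card_filter_isDiameter_le_one
      simp only [mem_filter, IsDiameter] at hp ⊢
      exact ⟨hp.1, by omega⟩
    · exact hears ▸ hT.card_filter_chordLen_le_card_ears (by simp only [mem_Icc] at hi; omega)
  have heq := (sum_eq_sum_iff_of_le hle).mp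
    (by rw [hT.sum_card_filter_chordLen, sum_Icc_ite_two_mul_eq_sub_three])
  refine ⟨fun i hi2 hi => ?_, fun ⟨m, hm⟩ => ?_⟩
  · simpa [show 2 * i ≠ n by omega] using heq i (mem_Icc.mpr ⟨hi2, by omega⟩)
  · have hdiam := heq (n / 2) (mem_Icc.mpr ⟨by omega, le_rfl⟩)
    rw [if_pos (by omega)] at hdiam
    rw [← hdiam]
    congr 1
    exact filter_congr fun p _ => by unfold IsDiameter; omega

/-- For `n ≥ 5`, if a triangulation `T` of the `n`-gon has exactly two ears,
then for every `2 ≤ i ≤ ⌈n/2⌉ - 1` it contains exactly two chords of length `i`, and if `n` is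
even it contains exactly one diameter. -/
theorem two_ears_chord_profile (n : ℕ) (hn : 5 ≤ n) (T : Finset (Sym2 (ZMod n)))
    (hT : IsTriangulation n T)
    (hears : (T.filter (fun p => chordLen p = 2)).card = 2) :
    (∀ i : ℕ, 2 ≤ i → i ≤ (n + 1) / 2 - 1 →
      (T.filter (fun p => chordLen p = i)).card = 2) ∧
    (Even n → (T.filter (fun p => IsDiameter p)).card = 1) :=
  two_ears_chord_profile_general n T hT hears
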